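/- For all N, κ > 0 there is a constant c_{N,κ} > 0, depending only on η, N and κ, such that for all positive harmonic functions H₁, H₂ on S', every N-sparse subset Z of S × S (points counted with multiplicity) and every subset Z' of S × S such that Z is κ-dominated by Z', one has Σ_{(ζ,ξ) ∈ Z} H₁(ζ) H₂(ξ) ≤ c_{N,κ} Σ_{(ζ',ξ') ∈ Z'} H₁(ζ') H₂(ξ'). -/

import Mathlib

open MeasureTheory Filter Set
open scoped ENNReal Topology

noncomputable section

/-- `η = a + ib`. -/
def etaC (a b : ℝ) : ℂ := (a : ℂ) + (b : ℂ) * Complex.I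

/-- The open sector `S = {u+iv : v > 0, bu + av > 0}`. -/
def sectorS (a b : ℝ) : Set ℂ := {z : ℂ | 0 < z.im ∧ 0 < b * z.re + a * z.im}

/-- The larger sector `S' = {u+iv : v > -log 3, bu + av > -log 3}`. -/
def sectorS' (a b : ℝ) : Set ℂ :=
  {z : ℂ | -Real.log 3 < z.im ∧ -Real.log 3 < b * z.re + a * z.im}

/-- A real-valued function on `ℂ` is harmonic on a set: it is `C²` there and its Laplacian
(the sum of the second derivatives in the directions `1` and `i`) vanishes. -/
def HarmonicOnSet (f : ℂ → ℝ) (U : Set ℂ) : Prop :=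
  ContDiffOn ℝ 2 f U ∧
    ∀ z ∈ U, (iteratedFDeriv ℝ 2 f z) ![1, 1] + (iteratedFDeriv ℝ 2 f z) ![Complex.I, Complex.I] = 0

/-- A positive harmonic function on the sector `S'`. -/
def PosHarmonic (a b : ℝ) (H : ℂ → ℝ) : Prop :=
  (∀ z ∈ sectorS' a b, 0 < H z) ∧ HarmonicOnSet H (sectorS' a b)

/-- The exponent `γ = π/θ₀`, where `θ₀ = arg(-η̄) ∈ (0,π)` is the opening angle of `S`. -/
def gammaExp (a b : ℝ) : ℝ := Real.pi / Complex.arg (((-a : ℝ) : ℂ) + (b : ℂ) * Complex.I)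

/-- `c`-admissibility of a function `H` on `S'`: there is `H̃` with `H̃ ∘ Φ = H` on `S`
(where `Φ(ζ) = ζ^γ`), continuous on the closed upper half-plane, bounded by `c` on `ℝ`,
with `∫_ℝ H̃(t)|t|^{-1+1/γ} dt ≤ c`, and satisfying the Poisson formula. -/
def Admissible (a b c : ℝ) (H : ℂ → ℝ) : Prop :=
  ∃ Ht : ℂ → ℝ,
    ContinuousOn Ht {z : ℂ | 0 ≤ z.im} ∧
    (∀ ζ ∈ sectorS a b, Ht (ζ ^ ((gammaExp a b : ℝ) : ℂ)) = H ζ) ∧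
    (∀ t : ℝ, Ht (t : ℂ) ≤ c) ∧
    Integrable (fun t : ℝ => Ht (t : ℂ) * |t| ^ (-1 + 1 / gammaExp a b)) ∧
    (∫ t : ℝ, Ht (t : ℂ) * |t| ^ (-1 + 1 / gammaExp a b)) ≤ c ∧
    (∀ U V : ℝ, 0 < V →
      Ht ((U : ℂ) + (V : ℂ) * Complex.I) =
        (1 / Real.pi) * ∫ t : ℝ, Ht (t : ℂ) * (V / (V ^ 2 + (t - U) ^ 2)))

/-- The point `-η̄ b⁻¹ s + l` on the half-line `Λ_{1,s}`. -/
def lam1pt (a b s l : ℝ) : ℂ :=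
  -(starRingEnd ℂ (etaC a b)) * ((s / b : ℝ) : ℂ) + (l : ℂ)

/-- The point `b⁻¹ s - η̄ l` on the half-line `Λ_{2,s}`. -/
def lam2pt (a b s l : ℝ) : ℂ :=
  ((s / b : ℝ) : ℂ) - (starRingEnd ℂ (etaC a b)) * (l : ℂ)


/-- A collection of points with multiplicities (encoded as a multiplicity function
`Z : α → ℕ`) is `N`-sparse if every open ball of radius `1` contains at most `N` of its
points counted with multiplicity. -/
def NSparse {α : Type*} [PseudoMetricSpace α] (N : ℝ) (Z : α → ℕ) : Prop :=
  ∀ x : α,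
    (∑' y : α, Set.indicator (Metric.ball x 1) (fun y => ((Z y : ℝ≥0∞))) y) ≤ ENNReal.ofReal N

/-- `Z` is `κ`-dominated by `Z'` (both with multiplicities): every point of `Z` lies at
distance at most `κ` from some point of `Z'`. -/
def DomBy {α : Type*} [PseudoMetricSpace α] (κ : ℝ) (Z Z' : α → ℕ) : Prop :=
  ∀ x, Z x ≠ 0 → ∃ y, Z' y ≠ 0 ∧ dist x y ≤ κ

/-!
Harnack's inequality: a positive harmonic function on a disc of radius `R` varies at most by a
factor `2` on the concentric disc of radius `R / 6` (apply the Schwarz lemma to the Cayley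
transform of a holomorphic function with real part `f`). Each point of the convex sector `S` is
the centre of a disc of fixed radius inside `S'`, so chaining along segments gives
`H ζ ≤ C * H ζ'` whenever `ζ, ζ' ∈ S` are `κ`-close. Charging every point of `Z` to the points of
`Z'` within distance `κ`, a point of `Z'` is charged at most `K * N` times, where `K` unit balls
cover a ball of radius `κ`.
-/

open Metric InnerProductSpace

theorem HarmonicOnSet.harmonicOnNhd {f : ℂ → ℝ} {U : Set ℂ} (hU : IsOpen U)
    (hf : HarmonicOnSet f U) : HarmonicOnNhd f U := fun x hx =>
  ⟨hf.1.contDiffAt (hU.mem_nhds hx), by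
    filter_upwards [hU.mem_nhds hx] with y hy
    rw [laplacian_eq_iteratedFDeriv_complexPlane]
    exact hf.2 y hy⟩

theorem Complex.norm_sub_lt_norm_add_conj {w w₀ : ℂ} (hw : 0 < w.re) (hw₀ : 0 < w₀.re) :
    ‖w - w₀‖ < ‖w + (starRingEnd ℂ) w₀‖ := by
  rw [← sq_lt_sq₀ (norm_nonneg _) (norm_nonneg _), Complex.sq_norm, Complex.sq_norm]
  simp only [Complex.normSq_apply, Complex.sub_re, Complex.sub_im, Complex.add_re,
    Complex.add_im, Complex.conj_re, Complex.conj_im]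
  nlinarith [mul_pos hw hw₀]

theorem HarmonicOnNhd.le_two_mul_of_dist_le {f : ℂ → ℝ} {c z : ℂ} {R : ℝ} (hR : 0 < R)
    (hf : HarmonicOnNhd f (ball c R)) (hpos : ∀ w ∈ ball c R, 0 < f w)
    (hz : dist z c ≤ R / 6) : f z ≤ 2 * f c := by
  obtain ⟨F, hF, hFre'⟩ := hf.exists_analyticOnNhd_ball_re_eq
  have hFre : ∀ w ∈ ball c R, (F w).re = f w := fun w hw => hFre' hw
  have hc : c ∈ ball c R := mem_ball_self hR
  have hzR : z ∈ ball c R := mem_ball.2 (by linarith)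
  have hFpos : ∀ w ∈ ball c R, 0 < (F w).re := fun w hw => (hFre w hw).symm ▸ hpos w hw
  have hden : ∀ w ∈ ball c R, F w + (starRingEnd ℂ) (F c) ≠ 0 := fun w hw h => by
    have := congrArg Complex.re h
    simp only [Complex.add_re, Complex.conj_re, Complex.zero_re] at this
    linarith [hFpos w hw, hFpos c hc]
  set Φ : ℂ → ℂ := fun w => (F w - F c) / (F w + (starRingEnd ℂ) (F c))
  have hΦc : Φ c = 0 := by simp [Φ]
  have hΦ : DifferentiableOn ℂ Φ (ball c R) :=
    (hF.differentiableOn.sub_const _).div (hF.differentiableOn.add_const _) hden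
  have hmaps : MapsTo Φ (ball c R) (closedBall (Φ c) 1) := fun w hw => by
    rw [hΦc, mem_closedBall, dist_zero_right, norm_div,
      div_le_one (norm_pos_iff.2 (hden w hw))]
    exact (Complex.norm_sub_lt_norm_add_conj (hFpos w hw) (hFpos c hc)).le
  have hΦz : ‖Φ z‖ ≤ 1 / 6 := by
    have := Complex.dist_le_div_mul_dist_of_mapsTo_ball hΦ hmaps hzR
    rw [hΦc, dist_zero_right] at this
    calc ‖Φ z‖ ≤ 1 / R * dist z c := this
      _ ≤ 1 / R * (R / 6) := by gcongr
      _ = 1 / 6 := by field_simp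
  have hconj : ‖F c + (starRingEnd ℂ) (F c)‖ = 2 * f c := by
    rw [Complex.add_conj, Complex.norm_real, Real.norm_eq_abs, hFre c hc,
      abs_of_pos (by linarith [hpos c hc])]
  have hsub : ‖F z - F c‖ ≤ 1 / 6 * (‖F z - F c‖ + 2 * f c) := by
    calc ‖F z - F c‖ = ‖Φ z‖ * ‖F z + (starRingEnd ℂ) (F c)‖ := by
          rw [← norm_mul, div_mul_cancel₀ _ (hden z hzR)]
      _ ≤ 1 / 6 * (‖F z - F c‖ + ‖F c + (starRingEnd ℂ) (F c)‖) := by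
          gcongr
          exact (congrArg norm (by ring)).trans_le (norm_add_le _ _)
      _ = 1 / 6 * (‖F z - F c‖ + 2 * f c) := by rw [hconj]
  have hre : f z - f c ≤ ‖F z - F c‖ := by
    rw [← hFre z hzR, ← hFre c hc, ← Complex.sub_re]
    exact Complex.re_le_norm _
  linarith [hpos c hc]

theorem Convex.le_pow_mul_of_forall_dist_le {E : Type*} [NormedAddCommGroup E] [NormedSpace ℝ E]
    {S : Set E} (hS : Convex ℝ S) {g : E → ℝ} {δ K : ℝ} (hK : 0 ≤ K)
    (hg : ∀ z ∈ S, ∀ c ∈ S, dist z c ≤ δ → g z ≤ K * g c) (n : ℕ) :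
    ∀ z ∈ S, ∀ z' ∈ S, dist z z' ≤ n * δ → g z ≤ K ^ n * g z' := by
  induction n with
  | zero =>
    intro z _ z' _ h
    obtain rfl : z = z' := dist_le_zero.1 (by simpa using h)
    simp
  | succ n ih =>
    intro z hz z' hz' h
    set m := AffineMap.lineMap z' z ((n : ℝ) / (n + 1))
    have ht : (n : ℝ) / (n + 1) ∈ Icc (0 : ℝ) 1 :=
      ⟨by positivity, div_le_one_of_le₀ (by linarith) (by positivity)⟩
    have hm : m ∈ S := hS.lineMap_mem hz' hz ht
    have hzm : dist z m ≤ δ := by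
      have : ‖1 - (n : ℝ) / (n + 1)‖ = 1 / (n + 1) := by
        rw [Real.norm_eq_abs, abs_of_nonneg (by linarith [ht.2])]
        field_simp
        ring
      rw [dist_comm, dist_lineMap_right, this, dist_comm]
      calc 1 / (n + 1) * dist z z' ≤ 1 / (n + 1) * ((n + 1 : ℕ) * δ) := by gcongr
        _ = δ := by push_cast; field_simp
    have hmz' : dist m z' ≤ n * δ := by
      rw [dist_lineMap_left, Real.norm_eq_abs, abs_of_nonneg ht.1, dist_comm]
      calc (n : ℝ) / (n + 1) * dist z z' ≤ n / (n + 1) * ((n + 1 : ℕ) * δ) := by gcongr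
        _ = n * δ := by push_cast; field_simp
    calc g z ≤ K * g m := hg z hz m hm hzm
      _ ≤ K * (K ^ n * g z') := by gcongr; exact ih m hm z' hz' hmz'
      _ = K ^ (n + 1) * g z' := by ring

theorem convex_sectorS (a b : ℝ) : Convex ℝ (sectorS a b) := by
  refine (convex_halfSpace_gt (f := Complex.im) ?_ 0).inter
    (convex_halfSpace_gt (f := fun z : ℂ => b * z.re + a * z.im) ?_ 0)
  · exact ⟨Complex.add_im, fun r z => by simp⟩
  · refine ⟨fun z w => ?_, fun r z => ?_⟩ <;> simp <;> ring

theorem isOpen_sectorS' (a b : ℝ) : IsOpen (sectorS' a b) :=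
  (isOpen_lt continuous_const Complex.continuous_im).inter
    (isOpen_lt continuous_const (by fun_prop : Continuous fun z : ℂ => b * z.re + a * z.im))

theorem ball_subset_sectorS' {a b : ℝ} {z : ℂ} (hz : z ∈ sectorS a b) :
    ball z (Real.log 3 / (|a| + |b| + 1)) ⊆ sectorS' a b := by
  intro w hw
  have hlog : 0 < Real.log 3 := Real.log_pos (by norm_num)
  have hw' : ‖w - z‖ * (|a| + |b| + 1) < Real.log 3 := by
    rw [mem_ball, dist_eq_norm, lt_div_iff₀ (by positivity)] at hw
    exact hw
  have hre : |(w - z).re| ≤ ‖w - z‖ := Complex.abs_re_le_norm _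
  have him : |(w - z).im| ≤ ‖w - z‖ := Complex.abs_im_le_norm _
  have hlin : |b * (w - z).re + a * (w - z).im| ≤ ‖w - z‖ * (|a| + |b|) := by
    calc _ ≤ |b| * |(w - z).re| + |a| * |(w - z).im| := by
          simpa only [abs_mul] using abs_add_le (b * (w - z).re) (a * (w - z).im)
      _ ≤ |b| * ‖w - z‖ + |a| * ‖w - z‖ := by gcongr
      _ = _ := by ring
  obtain ⟨hz1, hz2⟩ := hz
  simp only [Complex.sub_re, Complex.sub_im] at him hlin
  constructor
  · nlinarith [abs_le.1 him, norm_nonneg (w - z), abs_nonneg a, abs_nonneg b]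
  · nlinarith [abs_le.1 hlin, norm_nonneg (w - z)]

theorem exists_harnack_const_sectorS (a b κ : ℝ) :
    ∃ C : ℝ, 0 < C ∧ ∀ H : ℂ → ℝ, PosHarmonic a b H →
      ∀ z ∈ sectorS a b, ∀ z' ∈ sectorS a b, dist z z' ≤ κ → H z ≤ C * H z' := by
  set d := Real.log 3 / (|a| + |b| + 1)
  have hd : 0 < d := div_pos (Real.log_pos (by norm_num)) (by positivity)
  refine ⟨2 ^ ⌈κ / (d / 6)⌉₊, by positivity, fun H hH z hz z' hz' hzz' => ?_⟩
  have hharm := hH.2.harmonicOnNhd (isOpen_sectorS' a b)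
  refine (convex_sectorS a b).le_pow_mul_of_forall_dist_le (δ := d / 6) zero_le_two
    (fun z _ c hc hzc => ?_) _ z hz z' hz' ?_
  · exact HarmonicOnNhd.le_two_mul_of_dist_le hd (hharm.mono (ball_subset_sectorS' hc))
      (fun w hw => hH.1 w (ball_subset_sectorS' hc hw)) hzc
  · exact hzz'.trans ((div_le_iff₀ (by positivity)).1 (Nat.le_ceil _))

theorem exists_tsum_indicator_closedBall_le_of_nSparse {E : Type*} [NormedAddCommGroup E]
    [ProperSpace E] (κ : ℝ) :
    ∃ K : ℕ, ∀ (N : ℝ) (Z : E → ℕ), NSparse N Z → ∀ q : E,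
      ∑' y, (closedBall q κ).indicator (fun y => (Z y : ℝ≥0∞)) y ≤ K * ENNReal.ofReal N := by
  obtain ⟨t, -, ht⟩ := (isCompact_closedBall (0 : E) κ).elim_nhds_subcover (fun x => ball x 1)
    (fun x _ => ball_mem_nhds x one_pos)
  refine ⟨t.card, fun N Z hZ q => ?_⟩
  have hcover : ∀ y, (closedBall q κ).indicator (fun y => (Z y : ℝ≥0∞)) y ≤
      ∑ x ∈ t, (ball (q + x) 1).indicator (fun y => (Z y : ℝ≥0∞)) y := by
    intro y
    by_cases hy : y ∈ closedBall q κ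
    · have : y - q ∈ closedBall (0 : E) κ := by rwa [mem_closedBall_iff_norm, sub_zero,
        ← dist_eq_norm]
      obtain ⟨x, hxt, hx⟩ := mem_iUnion₂.1 (ht this)
      have hyx : y ∈ ball (q + x) 1 := by
        rw [mem_ball_iff_norm, sub_add_eq_sub_sub]
        exact mem_ball_iff_norm.1 hx
      rw [indicator_of_mem hy]
      exact (indicator_of_mem hyx _).symm.le.trans
        (Finset.single_le_sum (f := fun x => (ball (q + x) 1).indicator (fun y => (Z y : ℝ≥0∞)) y)
          (fun _ _ => zero_le) hxt)
    · simp [indicator_of_notMem hy]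
  calc ∑' y, (closedBall q κ).indicator (fun y => (Z y : ℝ≥0∞)) y
      ≤ ∑' y, ∑ x ∈ t, (ball (q + x) 1).indicator (fun y => (Z y : ℝ≥0∞)) y :=
        ENNReal.tsum_le_tsum hcover
    _ = ∑ x ∈ t, ∑' y, (ball (q + x) 1).indicator (fun y => (Z y : ℝ≥0∞)) y :=
        Summable.tsum_finsetSum fun _ _ => ENNReal.summable
    _ ≤ ∑ _x ∈ t, ENNReal.ofReal N := Finset.sum_le_sum fun x _ => hZ (q + x)
    _ = t.card * ENNReal.ofReal N := by rw [Finset.sum_const, nsmul_eq_mul]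

theorem DomBy.tsum_mul_le {α : Type*} [PseudoMetricSpace α] {κ : ℝ} {Z Z' : α → ℕ}
    (hdom : DomBy κ Z Z') {w : α → ℝ≥0∞} {A B : ℝ≥0∞}
    (hB : ∀ q, ∑' p, (closedBall q κ).indicator (fun p => (Z p : ℝ≥0∞)) p ≤ B)
    (hw : ∀ p q, Z p ≠ 0 → Z' q ≠ 0 → dist p q ≤ κ → w p ≤ A * w q) :
    ∑' p, Z p * w p ≤ A * B * ∑' q, Z' q * w q := by
  set W : α → ℝ≥0∞ := fun q => Z' q * w q
  have hpoint : ∀ p, (Z p : ℝ≥0∞) * w p ≤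
      A * ∑' q, (Z p : ℝ≥0∞) * (closedBall p κ).indicator W q := by
    intro p
    by_cases hp : Z p = 0
    · simp [hp]
    obtain ⟨q, hq, hpq⟩ := hdom p hp
    calc (Z p : ℝ≥0∞) * w p ≤ Z p * (A * W q) := by
          gcongr
          refine (hw p q hp hq hpq).trans ?_
          gcongr
          exact le_mul_of_one_le_left zero_le (by exact_mod_cast Nat.one_le_iff_ne_zero.2 hq)
      _ = A * ((Z p : ℝ≥0∞) * (closedBall p κ).indicator W q) := by
          rw [indicator_of_mem (mem_closedBall.2 (by rwa [dist_comm]))]; ring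
      _ ≤ _ := by gcongr; exact ENNReal.le_tsum q
  have hswap : ∀ q p, (Z p : ℝ≥0∞) * (closedBall p κ).indicator W q =
      W q * (closedBall q κ).indicator (fun p => (Z p : ℝ≥0∞)) p := by
    intro q p
    by_cases h : dist p q ≤ κ
    · rw [indicator_of_mem (mem_closedBall'.2 h), indicator_of_mem (mem_closedBall.2 h), mul_comm]
    · rw [indicator_of_notMem (mt mem_closedBall'.1 h), indicator_of_notMem (mt mem_closedBall.1 h),
        mul_zero, mul_zero]
  calc ∑' p, (Z p : ℝ≥0∞) * w p
      ≤ ∑' p, A * ∑' q, (Z p : ℝ≥0∞) * (closedBall p κ).indicator W q :=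
        ENNReal.tsum_le_tsum hpoint
    _ = A * ∑' q, W q * ∑' p, (closedBall q κ).indicator (fun p => (Z p : ℝ≥0∞)) p := by
        rw [ENNReal.tsum_mul_left, ENNReal.tsum_comm]
        simp_rw [hswap, ENNReal.tsum_mul_left]
    _ ≤ A * ∑' q, W q * B := by gcongr with q; exact hB q
    _ = A * B * ∑' q, W q := by rw [ENNReal.tsum_mul_right]; ring

theorem stmt7_general (a b : ℝ) (N κ : ℝ) (hN : 0 < N) :
    ∃ C : ℝ, 0 < C ∧
      ∀ H₁ H₂ : ℂ → ℝ, PosHarmonic a b H₁ → PosHarmonic a b H₂ →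
        ∀ Z Z' : ℂ × ℂ → ℕ,
          (∀ p : ℂ × ℂ, Z p ≠ 0 → p.1 ∈ sectorS a b ∧ p.2 ∈ sectorS a b) →
          (∀ p : ℂ × ℂ, Z' p ≠ 0 → p.1 ∈ sectorS a b ∧ p.2 ∈ sectorS a b) →
          NSparse N Z → DomBy κ Z Z' →
          (∑' p : ℂ × ℂ, (Z p : ℝ≥0∞) * (ENNReal.ofReal (H₁ p.1) * ENNReal.ofReal (H₂ p.2))) ≤
            ENNReal.ofReal C *
              ∑' p : ℂ × ℂ, (Z' p : ℝ≥0∞) * (ENNReal.ofReal (H₁ p.1) * ENNReal.ofReal (H₂ p.2)) := by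
  obtain ⟨C, hC, hH⟩ := exists_harnack_const_sectorS a b κ
  obtain ⟨K, hK⟩ := exists_tsum_indicator_closedBall_le_of_nSparse (E := ℂ × ℂ) κ
  refine ⟨C * C * ((K + 1) * N), by positivity, fun H₁ H₂ hH₁ hH₂ Z Z' hZ hZ' hsparse hdom => ?_⟩
  refine (hdom.tsum_mul_le (A := ENNReal.ofReal (C * C)) (hK N Z hsparse) ?_).trans ?_
  · intro p q hp hq hpq
    rw [Prod.dist_eq, max_le_iff] at hpq
    have h₁ := hH H₁ hH₁ p.1 (hZ p hp).1 q.1 (hZ' q hq).1 hpq.1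
    have h₂ := hH H₂ hH₂ p.2 (hZ p hp).2 q.2 (hZ' q hq).2 hpq.2
    calc ENNReal.ofReal (H₁ p.1) * ENNReal.ofReal (H₂ p.2)
        ≤ ENNReal.ofReal (C * H₁ q.1) * ENNReal.ofReal (C * H₂ q.2) := by gcongr
      _ = _ := by simp only [ENNReal.ofReal_mul hC.le]; ring
  · gcongr
    rw [ENNReal.ofReal_mul (by positivity : 0 ≤ C * C),
      ENNReal.ofReal_mul (by positivity : (0 : ℝ) ≤ K + 1),
      ENNReal.ofReal_add (by positivity) zero_le_one, ENNReal.ofReal_natCast, ENNReal.ofReal_one]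
    gcongr
    exact le_self_add

/-- comparison of double sums `Σ H₁(ζ)H₂(ξ)` over an `N`-sparse family `Z` in
`S × S` dominated by another family `Z'` in `S × S`, for positive harmonic `H₁, H₂` on `S'`. -/
theorem stmt7 (a b : ℝ) (hb : 0 < b) (N κ : ℝ) (hN : 0 < N) (hκ : 0 < κ) :
    ∃ C : ℝ, 0 < C ∧
      ∀ H₁ H₂ : ℂ → ℝ, PosHarmonic a b H₁ → PosHarmonic a b H₂ →
        ∀ Z Z' : ℂ × ℂ → ℕ,
          (∀ p : ℂ × ℂ, Z p ≠ 0 → p.1 ∈ sectorS a b ∧ p.2 ∈ sectorS a b) →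
          (∀ p : ℂ × ℂ, Z' p ≠ 0 → p.1 ∈ sectorS a b ∧ p.2 ∈ sectorS a b) →
          NSparse N Z → DomBy κ Z Z' →
          (∑' p : ℂ × ℂ, (Z p : ℝ≥0∞) * (ENNReal.ofReal (H₁ p.1) * ENNReal.ofReal (H₂ p.2))) ≤
            ENNReal.ofReal C *
              ∑' p : ℂ × ℂ, (Z' p : ℝ≥0∞) * (ENNReal.ofReal (H₁ p.1) * ENNReal.ofReal (H₂ p.2)) :=
  stmt7_general a b N κ hN
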